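/- arXiv:1507.04631 — 2 statements merged into one kernel-verified Lean document; each statement's English description precedes it below -/
import Mathlib

section
/- Decomposition of delay-plus-window element: for integers d ≥ 1 and real w > 0, with w' = w/d, the bivariate function δ_d ⊗ δ^{+w} equals the d-fold self-convolution (δ_1 ⊗ δ^{+w'})^(d). -/
open scoped ENNReal NNReal

/-- Min-plus convolution of bivariate functions. -/
noncomputable def conv (f g : ℕ → ℕ → ℝ≥0∞) : ℕ → ℕ → ℝ≥0∞ :=
  fun s t => ⨅ τ ∈ Finset.Icc s t, f s τ + g τ t

/-- The neutral element δ : δ(s,t)=0 if s ≥ t, ∞ otherwise. -/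
noncomputable def delta : ℕ → ℕ → ℝ≥0∞ := fun s t => if t ≤ s then 0 else ∞

/-- n-fold self-convolution: f^(0) = δ, f^(n+1) = f^(n) ⊗ f. -/
noncomputable def convPow (f : ℕ → ℕ → ℝ≥0∞) : ℕ → ℕ → ℕ → ℝ≥0∞
  | 0 => delta
  | n + 1 => conv (convPow f n) f

/-- Subadditive subClosure f* = inf over n of f^(n). -/
noncomputable def subClosure (f : ℕ → ℕ → ℝ≥0∞) : ℕ → ℕ → ℝ≥0∞ :=
  fun s t => ⨅ n : ℕ, convPow f n s t

/-- Delay element: δ_d(s,t) = 0 if s ≥ t − d, ∞ otherwise. -/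
noncomputable def deltaD (d : ℕ) : ℕ → ℕ → ℝ≥0∞ := fun s t => if t ≤ s + d then 0 else ∞

/-- Window element: δ^{+w}(s,t) = w if s ≥ t, ∞ otherwise. -/
noncomputable def deltaW (w : ℝ≥0∞) : ℕ → ℕ → ℝ≥0∞ := fun s t => if t ≤ s then w else ∞

/-!
Convolving with δ^{+w} only adds `w` on `s ≤ t`: in the infimum over `τ ∈ [s, t]` every term
with `τ < t` is `∞`. So δ_d ⊗ δ^{+w} = δ_d + w there. Delays compose additively
(δ_a ⊗ δ_b = δ_{a+b}) and additive constants pass through the infimum, so by induction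
(δ_1 ⊗ δ^{+w'})^(n) = δ_n + n·w' on `s ≤ t`; take `n = d`, `w' = w / d`.
-/

lemma conv_congr {f f' g g' : ℕ → ℕ → ℝ≥0∞} (hf : ∀ s t, s ≤ t → f s t = f' s t)
    (hg : ∀ s t, s ≤ t → g s t = g' s t) (s t : ℕ) : conv f g s t = conv f' g' s t := by
  refine iInf_congr fun τ => iInf_congr fun hτ => ?_
  rw [Finset.mem_Icc] at hτ
  rw [hf s τ hτ.1, hg τ t hτ.2]

lemma conv_add_const (f g : ℕ → ℕ → ℝ≥0∞) (a b : ℝ≥0∞) (s t : ℕ) :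
    conv (fun s t => f s t + a) (fun s t => g s t + b) s t = conv f g s t + (a + b) := by
  simp only [conv, ENNReal.iInf₂_add, add_add_add_comm]

lemma conv_deltaW_apply (f : ℕ → ℕ → ℝ≥0∞) (w : ℝ≥0∞) {s t : ℕ} (hst : s ≤ t) :
    conv f (deltaW w) s t = f s t + w := by
  refine le_antisymm (iInf₂_le_of_le t (by simp [hst]) (by simp [deltaW])) (le_iInf₂ ?_)
  intro τ hτ
  rcases (Finset.mem_Icc.mp hτ).2.eq_or_lt with rfl | hτt
  · simp [deltaW]
  · simp [deltaW, hτt.not_ge]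

lemma conv_deltaD_deltaD_apply (a b : ℕ) {s t : ℕ} (hst : s ≤ t) :
    conv (deltaD a) (deltaD b) s t = deltaD (a + b) s t := by
  by_cases h : t ≤ s + (a + b)
  · -- hand over at `min t (s + a)`, as late as the first delay allows
    rw [deltaD, if_pos h]
    refine le_antisymm (iInf₂_le_of_le (min t (s + a)) ?_ ?_) zero_le
    · rw [Finset.mem_Icc]; omega
    · simp only [deltaD]
      rw [if_pos (by omega), if_pos (by omega), add_zero]
  · rw [deltaD, if_neg h, eq_top_iff]
    refine le_iInf₂ fun τ _ => ?_
    simp only [deltaD]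
    split_ifs <;> first | omega | simp

lemma convPow_conv_deltaD_one_deltaW_apply (w : ℝ≥0∞) (n : ℕ) {s t : ℕ} (hst : s ≤ t) :
    convPow (conv (deltaD 1) (deltaW w)) n s t = deltaD n s t + n * w := by
  induction n generalizing s t with
  | zero => simp [convPow, delta, deltaD]
  | succ n ih =>
    calc convPow (conv (deltaD 1) (deltaW w)) (n + 1) s t
        = conv (fun s t => deltaD n s t + n * w) (fun s t => deltaD 1 s t + w) s t :=
          conv_congr (fun _ _ => ih) (fun _ _ => conv_deltaW_apply _ w) s t
      _ = deltaD (n + 1) s t + (n + 1 : ℕ) * w := by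
          rw [conv_add_const, conv_deltaD_deltaD_apply n 1 hst]
          push_cast
          ring

theorem deltaD_deltaW_decomposition_general (d : ℕ) (hd : 1 ≤ d) (w : ℝ≥0) :
    ∀ s t : ℕ, s ≤ t →
      conv (deltaD d) (deltaW (w : ℝ≥0∞)) s t
        = convPow (conv (deltaD 1) (deltaW ((w / (d : ℝ≥0) : ℝ≥0) : ℝ≥0∞))) d s t := by
  intro s t hst
  have hd0 : (d : ℝ≥0) ≠ 0 := by positivity
  rw [conv_deltaW_apply _ _ hst, convPow_conv_deltaD_one_deltaW_apply _ d hst,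
    ← ENNReal.coe_natCast, ← ENNReal.coe_mul, mul_div_cancel₀ _ hd0]

/-- decomposition of the delay-plus-window element:
δ_d ⊗ δ^{+w} = (δ_1 ⊗ δ^{+w/d})^(d) for d ≥ 1, w > 0. -/
theorem deltaD_deltaW_decomposition (d : ℕ) (hd : 1 ≤ d) (w : ℝ≥0) (hw : 0 < w) :
    ∀ s t : ℕ, s ≤ t →
      conv (deltaD d) (deltaW (w : ℝ≥0∞)) s t
        = convPow (conv (deltaD 1) (deltaW ((w / (d : ℝ≥0) : ℝ≥0) : ℝ≥0∞))) d s t :=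
  deltaD_deltaW_decomposition_general d hd w
end

section
/- MGF bound for i.i.d. feedback system: Let (c_k) be i.i.d. non-negative random variables with M_c(−θ) = E[e^{−θ c_k}] for θ > 0, let S(s,t) = Σ_{k=s}^{t-1} c_k, and let S_win = (S ⊗ δ_d ⊗ δ^{+w})* ⊗ S with integer d > 0 and real w > 0. Then for every θ > 0, E[e^{−θ S_win(s,t)}] ≤ ( M_c(−θ)^d + d·e^{−θw} )^{⌊(t−s)/d⌋}. -/
/-!
Write `G = (S ⊗ δ_d ⊗ δ^{+w})* ⊗ S`. Pathwise, the last slot of `[s, s + L + 1)` is either served,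
or it closes a window of cost `w` that skips the `d` slots before it:
`G(s, s+L+1) ≥ min (G(s, s+L) + c_{s+L}) (w + G(s, s + (L+1-d)))`.
Since `G(s, s+L)` only depends on the slots before `s + L`, independence turns this into
`φ (L+1) ≤ M φ L + e φ (L+1-d)` for `φ L = E[e^{-θ G(s, s+L)}]`, `M = M_c(-θ)`, `e = e^{-θw}`.
If `ρ ^ d = M ^ d + d e ≤ 1`, convexity of `ρ ↦ ρ ^ d` gives `M ρ ^ j + e ≤ ρ ^ (j+1)` for
`j < d`, so `ρ ^ L` is a supersolution and `φ L ≤ ρ ^ L ≤ ρ ^ (d ⌊L/d⌋)`; otherwise the bound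
exceeds `1 ≥ φ L`.
-/

open scoped ENNReal NNReal
open MeasureTheory

/-- e^{−θ x} for an extended non-negative real x (equal to 0 when x = ∞). -/
noncomputable def expNeg (θ : ℝ) (x : ℝ≥0∞) : ℝ≥0∞ :=
  if x = ∞ then 0 else ENNReal.ofReal (Real.exp (-θ * x.toReal))


section MinPlus

variable {f f' g g' : ℕ → ℕ → ℝ≥0∞} {s t τ : ℕ}

lemma conv_le_add (hsτ : s ≤ τ) (hτt : τ ≤ t) : conv f g s t ≤ f s τ + g τ t :=
  iInf₂_le τ (Finset.mem_Icc.mpr ⟨hsτ, hτt⟩)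

lemma le_conv {x : ℝ≥0∞} (h : ∀ τ, s ≤ τ → τ ≤ t → x ≤ f s τ + g τ t) : x ≤ conv f g s t :=
  le_iInf₂ fun τ hτ => h τ (Finset.mem_Icc.mp hτ).1 (Finset.mem_Icc.mp hτ).2

lemma conv_subClosure_le (n : ℕ) (hsτ : s ≤ τ) (hτt : τ ≤ t) :
    conv (subClosure f) g s t ≤ convPow f n s τ + g τ t :=
  (conv_le_add hsτ hτt).trans (add_le_add_left (iInf_le _ n) _)

lemma le_conv_subClosure {x : ℝ≥0∞}
    (h : ∀ n τ, s ≤ τ → τ ≤ t → x ≤ convPow f n s τ + g τ t) :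
    x ≤ conv (subClosure f) g s t :=
  le_conv fun τ hsτ hτt => by
    rw [subClosure, ENNReal.iInf_add]
    exact le_iInf fun n => h n τ hsτ hτt

lemma convPow_min_le (hf : ∀ σ τ, σ ≤ τ → f (min σ t) (min τ t) ≤ f σ τ) (hst : s ≤ t)
    (n τ : ℕ) : convPow f n s (min τ t) ≤ convPow f n s τ := by
  induction n generalizing τ with
  | zero =>
    simp only [convPow, delta]
    split_ifs <;> first | exact le_rfl | exact le_top | omega
  | succ n ih =>
    exact le_conv fun σ hsσ hστ =>
      (conv_le_add (le_min hsσ hst) (min_le_min_right t hστ)).trans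
        (add_le_add (ih σ) (hf σ τ hστ))

def AgreeOn (s t : ℕ) (f f' : ℕ → ℕ → ℝ≥0∞) : Prop :=
  ∀ σ τ, s ≤ σ → τ ≤ t → f σ τ = f' σ τ

lemma AgreeOn.refl (f : ℕ → ℕ → ℝ≥0∞) : AgreeOn s t f f := fun _ _ _ _ => rfl

lemma AgreeOn.conv (hf : AgreeOn s t f f') (hg : AgreeOn s t g g') :
    AgreeOn s t (conv f g) (conv f' g') := fun σ τ hσ hτ =>
  iInf_congr fun ρ => iInf_congr fun hρ => by
    rw [Finset.mem_Icc] at hρ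
    rw [hf σ ρ hσ (by omega), hg ρ τ (by omega) hτ]

lemma AgreeOn.convPow (hf : AgreeOn s t f f') (n : ℕ) :
    AgreeOn s t (convPow f n) (convPow f' n) := by
  induction n with
  | zero => exact AgreeOn.refl _
  | succ n ih => exact ih.conv hf

lemma AgreeOn.subClosure (hf : AgreeOn s t f f') :
    AgreeOn s t (subClosure f) (subClosure f') := fun σ τ hσ hτ =>
  iInf_congr fun n => hf.convPow n σ τ hσ hτ

end MinPlus

noncomputable def cumSum (a : ℕ → ℝ≥0∞) (s t : ℕ) : ℝ≥0∞ := ∑ k ∈ Finset.Ico s t, a k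

noncomputable def feedbackElem (d : ℕ) (W : ℝ≥0∞) (a : ℕ → ℝ≥0∞) : ℕ → ℕ → ℝ≥0∞ :=
  conv (conv (cumSum a) (deltaD d)) (deltaW W)

noncomputable def windowedSum (d : ℕ) (W : ℝ≥0∞) (a : ℕ → ℝ≥0∞) : ℕ → ℕ → ℝ≥0∞ :=
  conv (subClosure (feedbackElem d W a)) (cumSum a)

section Pathwise

variable {a a' : ℕ → ℝ≥0∞} {d : ℕ} {W : ℝ≥0∞} {s t : ℕ}

lemma cumSum_le_of_subset {s' t' : ℕ} (h : ∀ k, s' ≤ k → k < t' → s ≤ k ∧ k < t) :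
    cumSum a s' t' ≤ cumSum a s t :=
  Finset.sum_le_sum_of_subset fun k hk => by
    rw [Finset.mem_Ico] at hk ⊢
    exact h k hk.1 hk.2

lemma cumSum_max (s u : ℕ) : cumSum a s (max s u) = cumSum a s u := by
  rw [cumSum, cumSum]
  congr 1
  ext k
  simp only [Finset.mem_Ico]
  omega

lemma cumSum_succ (h : s ≤ t) : cumSum a s (t + 1) = cumSum a s t + a t :=
  Finset.sum_Ico_succ_top h a

lemma agreeOn_cumSum (h : ∀ k, s ≤ k → k < t → a k = a' k) :
    AgreeOn s t (cumSum a) (cumSum a') := fun σ τ hσ hτ =>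
  Finset.sum_congr rfl fun k hk => by
    rw [Finset.mem_Ico] at hk
    exact h k (by omega) (by omega)

lemma conv_cumSum_deltaD (h : s ≤ t) :
    conv (cumSum a) (deltaD d) s t = cumSum a s (t - d) := by
  refine le_antisymm ?_ (le_conv fun τ _ hτt => ?_)
  · calc conv (cumSum a) (deltaD d) s t
        ≤ cumSum a s (max s (t - d)) + deltaD d (max s (t - d)) t :=
          conv_le_add (le_max_left _ _) (by omega)
      _ = cumSum a s (t - d) := by rw [deltaD, if_pos (by omega), add_zero, cumSum_max]
  · unfold deltaD
    split_ifs
    · exact (cumSum_le_of_subset fun k _ _ => by omega).trans le_self_add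
    · simp

lemma feedbackElem_apply (h : s ≤ t) :
    feedbackElem d W a s t = W + cumSum a s (t - d) := by
  refine le_antisymm ((conv_le_add h le_rfl).trans_eq ?_) (le_conv fun τ _ hτt => ?_)
  · rw [conv_cumSum_deltaD h, deltaW, if_pos le_rfl, add_comm]
  · unfold deltaW
    split_ifs
    · rw [show τ = t by omega, conv_cumSum_deltaD h, add_comm]
    · simp

lemma feedbackElem_min_le {σ τ : ℕ} (hστ : σ ≤ τ) :
    feedbackElem d W a (min σ t) (min τ t) ≤ feedbackElem d W a σ τ := by
  rw [feedbackElem_apply (min_le_min_right t hστ), feedbackElem_apply hστ]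
  gcongr
  exact cumSum_le_of_subset fun k _ _ => by omega

lemma windowedSum_mono_right {t' : ℕ} (hst : s ≤ t) (htt' : t ≤ t') :
    windowedSum d W a s t ≤ windowedSum d W a s t' :=
  le_conv_subClosure fun n τ hsτ _ =>
    (conv_subClosure_le n (le_min hsτ hst) (min_le_right τ t)).trans
      (add_le_add (convPow_min_le (fun _ _ => feedbackElem_min_le) hst n τ)
        (cumSum_le_of_subset fun k _ _ => by omega))

lemma windowedSum_congr (h : ∀ k, s ≤ k → k < t → a k = a' k) :
    windowedSum d W a s t = windowedSum d W a' s t :=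
  ((((agreeOn_cumSum h).conv (.refl _)).conv (.refl _)).subClosure.conv (agreeOn_cumSum h))
    s t le_rfl le_rfl

lemma min_le_windowedSum_succ (L : ℕ) :
    min (windowedSum d W a s (s + L) + a (s + L))
        (W + windowedSum d W a s (s + (L + 1 - d)))
      ≤ windowedSum d W a s (s + L + 1) := by
  refine le_conv_subClosure fun n τ hsτ hτt => ?_
  rcases Nat.lt_or_ge τ (s + L + 1) with hτ | hτ
  · refine (min_le_left _ _).trans ?_
    rw [cumSum_succ (by omega), ← add_assoc]
    gcongr
    exact conv_subClosure_le n hsτ (by omega)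
  obtain rfl : τ = s + L + 1 := le_antisymm hτt hτ
  refine (min_le_right _ _).trans ?_
  rw [cumSum, Finset.Ico_self, Finset.sum_empty, add_zero]
  cases n with
  | zero => simp [convPow, delta]
  | succ n =>
    refine le_conv fun σ hsσ hσt => ?_
    rw [feedbackElem_apply hσt, add_left_comm]
    gcongr
    calc windowedSum d W a s (s + (L + 1 - d))
        ≤ windowedSum d W a s (max σ (s + L + 1 - d)) :=
          windowedSum_mono_right (by omega) (by omega)
      _ ≤ convPow (feedbackElem d W a) n s σ + cumSum a σ (max σ (s + L + 1 - d)) :=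
          conv_subClosure_le n hsσ (le_max_left _ _)
      _ = convPow (feedbackElem d W a) n s σ + cumSum a σ (s + L + 1 - d) := by
          rw [cumSum_max]

end Pathwise

section ExpNeg

variable {θ : ℝ} {x y : ℝ≥0∞}

lemma expNeg_add : expNeg θ (x + y) = expNeg θ x * expNeg θ y := by
  by_cases hx : x = ∞
  · simp [expNeg, hx]
  by_cases hy : y = ∞
  · simp [expNeg, hy]
  rw [expNeg, expNeg, expNeg, if_neg (ENNReal.add_ne_top.mpr ⟨hx, hy⟩), if_neg hx, if_neg hy,
    ← ENNReal.ofReal_mul (Real.exp_nonneg _), ← Real.exp_add, ENNReal.toReal_add hx hy, mul_add]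

lemma expNeg_antitone (hθ : 0 ≤ θ) : Antitone (expNeg θ) := fun x y hxy => by
  by_cases hy : y = ∞
  · simp [expNeg, hy]
  rw [expNeg, expNeg, if_neg hy, if_neg (ne_top_of_le_ne_top hy hxy)]
  have := ENNReal.toReal_mono hy hxy
  exact ENNReal.ofReal_le_ofReal (Real.exp_le_exp.mpr (by nlinarith))

lemma expNeg_le_one (hθ : 0 ≤ θ) : expNeg θ x ≤ 1 :=
  (expNeg_antitone hθ (zero_le : 0 ≤ x)).trans_eq (by simp [expNeg])

lemma expNeg_min_le : expNeg θ (min x y) ≤ expNeg θ x + expNeg θ y := by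
  rcases min_choice x y with h | h <;> rw [h]
  exacts [le_self_add, le_add_self]

lemma expNeg_coe (r : ℝ≥0) : expNeg θ r = ENNReal.ofReal (Real.exp (-θ * r)) := by
  rw [expNeg, if_neg ENNReal.coe_ne_top, ENNReal.coe_toReal]

lemma expNeg_ofReal_le (hθ : 0 ≤ θ) (w : ℝ) :
    expNeg θ (ENNReal.ofReal w) ≤ ENNReal.ofReal (Real.exp (-θ * w)) := by
  rw [expNeg, if_neg ENNReal.ofReal_ne_top, ENNReal.toReal_ofReal']
  have := le_max_left w 0
  exact ENNReal.ofReal_le_ofReal (Real.exp_le_exp.mpr (by nlinarith))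

lemma measurable_expNeg : Measurable (expNeg θ) :=
  Measurable.ite (measurableSet_singleton ∞) measurable_const
    (ENNReal.measurable_ofReal.comp (Real.measurable_exp.comp
      (measurable_const.mul ENNReal.measurable_toReal)))

end ExpNeg

section Measurability

variable {Ω : Type*} {mΩ : MeasurableSpace Ω}

lemma measurable_conv {f g : Ω → ℕ → ℕ → ℝ≥0∞} (hf : ∀ s t, Measurable fun ω => f ω s t)
    (hg : ∀ s t, Measurable fun ω => g ω s t) (s t : ℕ) :
    Measurable fun ω => conv (f ω) (g ω) s t :=
  Measurable.iInf fun τ => Measurable.iInf fun _ => (hf s τ).add (hg τ t)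

lemma measurable_subClosure {f : Ω → ℕ → ℕ → ℝ≥0∞} (hf : ∀ s t, Measurable fun ω => f ω s t)
    (s t : ℕ) : Measurable fun ω => subClosure (f ω) s t := by
  refine Measurable.iInf fun n => ?_
  induction n generalizing s t with
  | zero => exact measurable_const
  | succ n ih => exact measurable_conv (fun s t => ih s t) hf s t

lemma measurable_windowedSum {a : ℕ → Ω → ℝ≥0∞} (ha : ∀ k, Measurable (a k)) (d : ℕ)
    (W : ℝ≥0∞) (s t : ℕ) : Measurable fun ω => windowedSum d W (a · ω) s t := by
  have hS (s t : ℕ) : Measurable fun ω => cumSum (a · ω) s t :=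
    Finset.measurable_sum _ fun k _ => ha k
  have hconst (f : ℕ → ℕ → ℝ≥0∞) (s t : ℕ) : Measurable fun _ : Ω => f s t := measurable_const
  exact measurable_conv (measurable_subClosure
    (measurable_conv (measurable_conv hS (hconst _)) (hconst _))) hS s t

end Measurability

section Probability

open ProbabilityTheory

variable {Ω : Type*} [MeasurableSpace Ω] {μ : Measure Ω} {a : ℕ → Ω → ℝ≥0∞} {θ : ℝ}
  {d : ℕ} {W : ℝ≥0∞}

/-- `windowedSum _ _ _ s t` only sees the slots before `t`, which are independent of slot `t`. -/
lemma lintegral_expNeg_windowedSum_mul (ha : ∀ k, Measurable (a k)) (hindep : iIndepFun a μ)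
    (s t : ℕ) :
    ∫⁻ ω, expNeg θ (windowedSum d W (a · ω) s t) * expNeg θ (a t ω) ∂μ
      = (∫⁻ ω, expNeg θ (windowedSum d W (a · ω) s t) ∂μ) * ∫⁻ ω, expNeg θ (a t ω) ∂μ := by
  let m : ℕ → MeasurableSpace Ω := fun k => MeasurableSpace.comap (a k) inferInstance
  have hm : ∀ k, m k ≤ ‹MeasurableSpace Ω› := fun k => (ha k).comap_le
  have hind : Indep (⨆ k ∈ Set.Iio t, m k) (⨆ k ∈ ({t} : Set ℕ), m k) μ :=
    indep_iSup_of_disjoint hm hindep (by simp)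
  refine lintegral_mul_eq_lintegral_mul_lintegral_of_independent_measurableSpace
    (iSup₂_le fun k _ => hm k) (iSup₂_le fun k _ => hm k) hind ?_ ?_
  · have hpast : ∀ ω, windowedSum d W (a · ω) s t
        = windowedSum d W (fun k => if k < t then a k ω else 0) s t := fun ω =>
      windowedSum_congr fun k _ hk => (if_pos hk).symm
    simp_rw [hpast]
    refine measurable_expNeg.comp (measurable_windowedSum (fun k => ?_) d W s t)
    split_ifs with hk
    · exact Measurable.of_comap_le (le_iSup₂ (f := fun k (_ : k ∈ Set.Iio t) => m k) k hk)
    · exact measurable_const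
  · exact measurable_expNeg.comp
      (Measurable.of_comap_le (le_iSup₂ (f := fun k (_ : k ∈ ({t} : Set ℕ)) => m k) t rfl))

lemma lintegral_expNeg_windowedSum_succ_le (hθ : 0 ≤ θ) (ha : ∀ k, Measurable (a k))
    (hindep : iIndepFun a μ) (s L : ℕ) :
    ∫⁻ ω, expNeg θ (windowedSum d W (a · ω) s (s + L + 1)) ∂μ
      ≤ (∫⁻ ω, expNeg θ (a (s + L) ω) ∂μ)
          * ∫⁻ ω, expNeg θ (windowedSum d W (a · ω) s (s + L)) ∂μ
        + expNeg θ W * ∫⁻ ω, expNeg θ (windowedSum d W (a · ω) s (s + (L + 1 - d))) ∂μ := by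
  have hG (t : ℕ) : Measurable fun ω => expNeg θ (windowedSum d W (a · ω) s t) :=
    measurable_expNeg.comp (measurable_windowedSum ha d W s t)
  calc ∫⁻ ω, expNeg θ (windowedSum d W (a · ω) s (s + L + 1)) ∂μ
      ≤ ∫⁻ ω, expNeg θ (windowedSum d W (a · ω) s (s + L)) * expNeg θ (a (s + L) ω)
          + expNeg θ W * expNeg θ (windowedSum d W (a · ω) s (s + (L + 1 - d))) ∂μ := by
        refine lintegral_mono fun ω => ?_
        rw [← expNeg_add, ← expNeg_add]
        exact (expNeg_antitone hθ (min_le_windowedSum_succ L)).trans expNeg_min_le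
    _ = _ := by
        rw [lintegral_add_right _ ((hG _).const_mul _),
          lintegral_const_mul _ (hG _), lintegral_expNeg_windowedSum_mul ha hindep, mul_comm]

end Probability

section Recursion

lemma pow_succ_sub_pow_succ_le {x ρ : ℝ} (hx : 0 ≤ x) (hxρ : x ≤ ρ) (n : ℕ) :
    ρ ^ (n + 1) - x ^ (n + 1) ≤ (n + 1) * ρ ^ n * (ρ - x) := by
  induction n with
  | zero => simp
  | succ n ih =>
    have hρ : 0 ≤ ρ := hx.trans hxρ
    calc ρ ^ (n + 2) - x ^ (n + 2) = ρ * (ρ ^ (n + 1) - x ^ (n + 1)) + x ^ (n + 1) * (ρ - x) := by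
          ring
      _ ≤ ρ * ((n + 1) * ρ ^ n * (ρ - x)) + ρ ^ (n + 1) * (ρ - x) := by
          gcongr
      _ = ((n + 1 : ℕ) + 1) * ρ ^ (n + 1) * (ρ - x) := by push_cast; ring

lemma mul_pow_add_le_pow_succ {x e ρ : ℝ} {d j : ℕ} (hx : 0 ≤ x) (hxρ : x ≤ ρ) (hρ1 : ρ ≤ 1)
    (hρd : ρ ^ d = x ^ d + d * e) (hj : j < d) : x * ρ ^ j + e ≤ ρ ^ (j + 1) := by
  obtain ⟨n, rfl⟩ : ∃ n, d = n + 1 := ⟨d - 1, by omega⟩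
  have hρ : 0 ≤ ρ := hx.trans hxρ
  have hconv := pow_succ_sub_pow_succ_le hx hxρ n
  have hjn : ρ ^ n ≤ ρ ^ j := pow_le_pow_of_le_one hρ hρ1 (by omega)
  have he : e ≤ ρ ^ n * (ρ - x) := by
    push_cast at hρd
    nlinarith
  calc x * ρ ^ j + e ≤ x * ρ ^ j + ρ ^ j * (ρ - x) := by
        gcongr
        exact he.trans (mul_le_mul_of_nonneg_right hjn (by linarith))
    _ = ρ ^ (j + 1) := by ring

lemma exists_pow_eq_mul_pow_add_le {x e : ℝ≥0} {d : ℕ} (hd : d ≠ 0) (hK : x ^ d + d * e ≤ 1) :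
    ∃ ρ : ℝ≥0, ρ ≤ 1 ∧ ρ ^ d = x ^ d + d * e ∧ ∀ j < d, x * ρ ^ j + e ≤ ρ ^ (j + 1) := by
  set ρ := (x ^ d + d * e) ^ ((d : ℝ)⁻¹)
  have hρd : ρ ^ d = x ^ d + d * e := NNReal.rpow_inv_natCast_pow _ hd
  have hρ1 : ρ ≤ 1 := (pow_le_one_iff_of_nonneg (by positivity) hd).mp (hρd.trans_le hK)
  have hxρ : x ≤ ρ :=
    (pow_le_pow_iff_left₀ (by positivity) (by positivity) hd).mp (le_self_add.trans_eq hρd.symm)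
  refine ⟨ρ, hρ1, hρd, fun j hj => ?_⟩
  have hρd' : (ρ : ℝ) ^ d = (x : ℝ) ^ d + d * e := by exact_mod_cast hρd
  exact_mod_cast mul_pow_add_le_pow_succ x.2 hxρ hρ1 hρd' hj

lemma le_pow_of_le_mul_add {φ : ℕ → ℝ≥0∞} {x e ρ : ℝ≥0∞} {d : ℕ} (hd : d ≠ 0) (h0 : φ 0 ≤ 1)
    (hφ : ∀ L, φ (L + 1) ≤ x * φ L + e * φ (L + 1 - d))
    (hρ : ∀ j < d, x * ρ ^ j + e ≤ ρ ^ (j + 1)) (L : ℕ) : φ L ≤ ρ ^ L := by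
  induction L using Nat.strong_induction_on with
  | _ L ih =>
    cases L with
    | zero => simpa using h0
    | succ L =>
      calc φ (L + 1) ≤ x * φ L + e * φ (L + 1 - d) := hφ L
        _ ≤ x * ρ ^ L + e * ρ ^ (L + 1 - d) := by gcongr <;> exact ih _ (by omega)
        _ ≤ ρ ^ (L + 1) := ?_
      rcases Nat.lt_or_ge L d with hL | hL
      · rw [show L + 1 - d = 0 by omega, pow_zero, mul_one]
        exact hρ L hL
      · obtain ⟨k, rfl⟩ : ∃ k, L = k + (d - 1) := ⟨L - (d - 1), by omega⟩
        calc x * ρ ^ (k + (d - 1)) + e * ρ ^ (k + (d - 1) + 1 - d)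
            = ρ ^ k * (x * ρ ^ (d - 1) + e) := by
              rw [show k + (d - 1) + 1 - d = k by omega]
              ring
          _ ≤ ρ ^ k * ρ ^ (d - 1 + 1) := by gcongr; exact hρ (d - 1) (by omega)
          _ = ρ ^ (k + (d - 1) + 1) := by rw [← pow_add, add_assoc]

lemma le_pow_div_of_le_mul_add {φ : ℕ → ℝ≥0∞} {x e : ℝ≥0∞} {d : ℕ} (hφ1 : ∀ L, φ L ≤ 1)
    (hφ : ∀ L, φ (L + 1) ≤ x * φ L + e * φ (L + 1 - d)) (L : ℕ) :
    φ L ≤ (x ^ d + d * e) ^ (L / d) := by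
  rcases le_or_gt 1 ((x ^ d + d * e) ^ (L / d)) with hK | hK
  · exact (hφ1 L).trans hK
  have hLd : L / d ≠ 0 := by
    rintro h
    simp [h] at hK
  have hd : d ≠ 0 := by
    rintro rfl
    simp at hLd
  have hK1 : x ^ d + d * e < 1 := by
    contrapose! hK
    exact one_le_pow₀ hK
  have hx : x ≠ ∞ := by
    rintro rfl
    simp [hd] at hK1
  have he : e ≠ ∞ := by
    rintro rfl
    simp [hd] at hK1
  lift x to ℝ≥0 using hx
  lift e to ℝ≥0 using he
  obtain ⟨ρ, hρ1, hρd, hρ⟩ := exists_pow_eq_mul_pow_add_le hd (by exact_mod_cast hK1.le)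
  calc φ L ≤ (ρ : ℝ≥0∞) ^ L :=
        le_pow_of_le_mul_add hd (hφ1 0) hφ (fun j hj => by exact_mod_cast hρ j hj) L
    _ ≤ (ρ : ℝ≥0∞) ^ (d * (L / d)) :=
        pow_le_pow_right_of_le_one' (by exact_mod_cast hρ1) (Nat.mul_div_le L d)
    _ = ((x : ℝ≥0∞) ^ d + d * e) ^ (L / d) := by
        rw [pow_mul]
        exact_mod_cast congrArg (· ^ (L / d)) hρd

end Recursion

theorem mgf_bound_iid_feedback_general {Ω : Type*} [MeasurableSpace Ω] (μ : Measure Ω)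
    [IsProbabilityMeasure μ] (c : ℕ → Ω → ℝ≥0)
    (hmeas : ∀ k, Measurable (c k))
    (hindep : ProbabilityTheory.iIndepFun c μ)
    (hident : ∀ k, μ.map (c k) = μ.map (c 0))
    (d : ℕ) (w : ℝ) (θ : ℝ) (hθ : 0 < θ)
    (S : Ω → ℕ → ℕ → ℝ≥0∞)
    (hS : ∀ ω s t, S ω s t = ∑ k ∈ Finset.Ico s t, (c k ω : ℝ≥0∞))
    (Mc : ℝ≥0∞) (hMc : Mc = ∫⁻ ω, ENNReal.ofReal (Real.exp (-θ * (c 0 ω : ℝ))) ∂μ) :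
    ∀ s t : ℕ, s ≤ t →
      (∫⁻ ω, expNeg θ
          (conv (subClosure (conv (conv (S ω) (deltaD d)) (deltaW (ENNReal.ofReal w)))) (S ω) s t) ∂μ)
        ≤ (Mc ^ d + (d : ℝ≥0∞) * ENNReal.ofReal (Real.exp (-θ * w))) ^ ((t - s) / d) := by
  intro s t hst
  obtain ⟨L, rfl⟩ : ∃ L, t = s + L := ⟨t - s, by omega⟩
  set a : ℕ → Ω → ℝ≥0∞ := fun k ω => c k ω
  have ha (k : ℕ) : Measurable (a k) := (hmeas k).coe_nnreal_ennreal
  have hmgf (k : ℕ) : ∫⁻ ω, expNeg θ (a k ω) ∂μ = Mc := by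
    have hck : ProbabilityTheory.IdentDistrib (c k) (c 0) μ μ :=
      ⟨(hmeas k).aemeasurable, (hmeas 0).aemeasurable, hident k⟩
    simp only [a, expNeg_coe, hMc]
    exact (hck.comp (u := fun r : ℝ≥0 => ENNReal.ofReal (Real.exp (-θ * r)))
      (by fun_prop)).lintegral_eq
  have hSa (ω : Ω) : S ω = cumSum (a · ω) := funext₂ (hS ω)
  simp_rw [hSa, Nat.add_sub_cancel_left]
  refine le_pow_div_of_le_mul_add
    (φ := fun L => ∫⁻ ω, expNeg θ (windowedSum d _ (a · ω) s (s + L)) ∂μ)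
    (fun L => (lintegral_mono fun _ => expNeg_le_one hθ.le).trans_eq (by simp))
    (fun L => (lintegral_expNeg_windowedSum_succ_le hθ.le ha
      (hindep.comp _ fun _ => measurable_coe_nnreal_ennreal) s L).trans ?_) L
  rw [hmgf]
  gcongr
  exact expNeg_ofReal_le hθ.le w

/-- MGF bound for the i.i.d. feedback system:
E[e^{−θ S_win(s,t)}] ≤ (M_c(−θ)^d + d e^{−θw})^{⌊(t−s)/d⌋}. -/
theorem mgf_bound_iid_feedback {Ω : Type*} [MeasurableSpace Ω] (μ : Measure Ω)
    [IsProbabilityMeasure μ] (c : ℕ → Ω → ℝ≥0)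
    (hmeas : ∀ k, Measurable (c k))
    (hindep : ProbabilityTheory.iIndepFun c μ)
    (hident : ∀ k, μ.map (c k) = μ.map (c 0))
    (d : ℕ) (hd : 0 < d) (w : ℝ) (hw : 0 < w) (θ : ℝ) (hθ : 0 < θ)
    (S : Ω → ℕ → ℕ → ℝ≥0∞)
    (hS : ∀ ω s t, S ω s t = ∑ k ∈ Finset.Ico s t, (c k ω : ℝ≥0∞))
    (Mc : ℝ≥0∞) (hMc : Mc = ∫⁻ ω, ENNReal.ofReal (Real.exp (-θ * (c 0 ω : ℝ))) ∂μ) :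
    ∀ s t : ℕ, s ≤ t →
      (∫⁻ ω, expNeg θ
          (conv (subClosure (conv (conv (S ω) (deltaD d)) (deltaW (ENNReal.ofReal w)))) (S ω) s t) ∂μ)
        ≤ (Mc ^ d + (d : ℝ≥0∞) * ENNReal.ofReal (Real.exp (-θ * w))) ^ ((t - s) / d) :=
  mgf_bound_iid_feedback_general μ c hmeas hindep hident d w θ hθ S hS Mc hMc
end
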